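/- arXiv:2604.02791 — 3 statements merged into one kernel-verified Lean document; each statement's English description precedes it below -/
import Mathlib

section
/- Let n > r ≥ 1 be integers and let G be a finite simple undirected graph on a vertex set V of cardinality n. Suppose there is a subset V_c ⊆ V with |V_c| = r such that every vertex of V_c is adjacent (in G) to every other vertex of V (i.e., each vertex of V_c is adjacent to every vertex in V_c \ {itself} and to every vertex in V \ V_c). Then G is (r,r')-redundant for every integer r' with 0 ≤ r' < r. -/
variable {V : Type*} [Fintype V] [DecidableEq V]

/-- `|B_i ∩ N_j| = |B_j ∩ N_i|` for distinct `i`, `j`, where `N_i` is the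
neighborhood of `i` and `B_i = N_i ∪ {i}`. -/
lemma card_extNbhd_inter_comm (G : SimpleGraph V) [DecidableRel G.Adj] {i j : V}
    (_h : i ≠ j) :
    (insert i (G.neighborFinset i) ∩ G.neighborFinset j).card =
      (insert j (G.neighborFinset j) ∩ G.neighborFinset i).card := by
  by_cases hadj : G.Adj i j
  · have hi : i ∈ G.neighborFinset j := by
      simpa [SimpleGraph.mem_neighborFinset] using hadj.symm
    have hj : j ∈ G.neighborFinset i := by
      simpa [SimpleGraph.mem_neighborFinset] using hadj
    rw [Finset.insert_inter_of_mem hi, Finset.insert_inter_of_mem hj,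
      Finset.card_insert_of_notMem (by simp),
      Finset.card_insert_of_notMem (by simp),
      Finset.inter_comm]
  · have hi : i ∉ G.neighborFinset j := by
      simp only [SimpleGraph.mem_neighborFinset]
      exact fun hc => hadj hc.symm
    have hj : j ∉ G.neighborFinset i := by
      simp only [SimpleGraph.mem_neighborFinset]
      exact hadj
    rw [Finset.insert_inter_of_notMem hi, Finset.insert_inter_of_notMem hj,
      Finset.inter_comm]

/-- The `r`-2-hop graph of `G`: distinct vertices `i`, `j` are adjacent iff
`|B_i ∩ N_j| ≥ r`. -/
def twoHopGraph (G : SimpleGraph V) [DecidableRel G.Adj] (r : ℕ) : SimpleGraph V where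
  Adj i j := i ≠ j ∧ r ≤ (insert i (G.neighborFinset i) ∩ G.neighborFinset j).card
  symm := by
    refine ⟨fun i j hij => ?_⟩
    exact ⟨hij.1.symm, (card_extNbhd_inter_comm G hij.1) ▸ hij.2⟩
  loopless := ⟨fun i h => h.1 rfl⟩

/-- `G` is `(r, r')`-redundant: its `r`-2-hop graph is connected, and any two
distinct vertices not adjacent in the `r`-2-hop graph satisfy `|B_i ∩ N_j| ≤ r'`. -/
def IsRedundant (G : SimpleGraph V) [DecidableRel G.Adj] (r r' : ℕ) : Prop :=
  (twoHopGraph G r).Connected ∧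
    ∀ i j : V, i ≠ j → ¬ (twoHopGraph G r).Adj i j →
      (insert i (G.neighborFinset i) ∩ G.neighborFinset j).card ≤ r'

/-!
Every vertex of the core `V_c` is universal, so `V_c ⊆ B_i` for every `i`. If `j ∉ V_c`, then
also `V_c ⊆ N_j`, so `|B_i ∩ N_j| ≥ r`. If `j ∈ V_c`, then `N_j = V ∖ {j}` and
`|B_i ∩ N_j| = |B_i| - 1`, while `|B_i| > r`: either `i ∉ V_c` and `B_i ⊇ V_c ∪ {i}`, or `i ∈ V_c`
and `B_i = V` with `n > r`. Hence the `r`-2-hop graph is complete.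
-/

namespace SimpleGraph

lemma IsUniversal.mem_insert_neighborFinset {G : SimpleGraph V} [DecidableRel G.Adj] {u : V}
    (hu : G.IsUniversal u) (i : V) : u ∈ insert i (G.neighborFinset i) := by
  rcases eq_or_ne i u with rfl | hiu
  · exact Finset.mem_insert_self _ _
  · exact Finset.mem_insert_of_mem ((G.mem_neighborFinset i u).2 (hu hiu.symm).symm)

section Core

variable {G : SimpleGraph V} [DecidableRel G.Adj] {Vc : Finset V}

lemma card_lt_card_insert_neighborFinset (hcore : ∀ u ∈ Vc, G.IsUniversal u)
    (hVc : Vc.card < Fintype.card V) (i : V) : Vc.card < (insert i (G.neighborFinset i)).card := by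
  by_cases hi : i ∈ Vc
  · rwa [(G.insert_neighborFinset_eq_univ i).2 (hcore i hi), Finset.card_univ]
  · calc Vc.card < (insert i Vc).card := Finset.card_lt_card (Finset.ssubset_insert hi)
      _ ≤ _ := Finset.card_le_card <| Finset.insert_subset (Finset.mem_insert_self _ _)
          fun u hu => (hcore u hu).mem_insert_neighborFinset i

lemma card_le_card_insert_neighborFinset_inter (hcore : ∀ u ∈ Vc, G.IsUniversal u)
    (hVc : Vc.card < Fintype.card V) {i j : V} (hij : i ≠ j) :
    Vc.card ≤ (insert i (G.neighborFinset i) ∩ G.neighborFinset j).card := by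
  by_cases hj : j ∈ Vc
  · rw [(G.neighborFinset_eq_erase_univ j).2 (hcore j hj), Finset.inter_erase, Finset.inter_univ,
      Finset.card_erase_of_mem ((hcore j hj).mem_insert_neighborFinset i)]
    have := card_lt_card_insert_neighborFinset hcore hVc i
    omega
  · refine Finset.card_le_card <| Finset.subset_inter
      (fun u hu => (hcore u hu).mem_insert_neighborFinset i)
      fun u hu => (G.mem_neighborFinset j u).2 (hcore u hu ?_).symm
    rintro rfl
    exact hj hu

lemma twoHopGraph_card_eq_top_of_isUniversal (hcore : ∀ u ∈ Vc, G.IsUniversal u)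
    (hVc : Vc.card < Fintype.card V) : twoHopGraph G Vc.card = ⊤ :=
  eq_top_iff_forall_ne_adj.2 fun _ _ hij =>
    ⟨hij, card_le_card_insert_neighborFinset_inter hcore hVc hij⟩

end Core

lemma isRedundant_of_twoHopGraph_eq_top [Nonempty V] {G : SimpleGraph V} [DecidableRel G.Adj]
    {r : ℕ} (h : twoHopGraph G r = ⊤) (r' : ℕ) : IsRedundant G r r' := by
  refine ⟨h ▸ connected_top, fun i j hij hnadj => absurd ?_ hnadj⟩
  rw [h]
  exact hij

end SimpleGraph

theorem isRedundant_of_core_general (G : SimpleGraph V) [DecidableRel G.Adj]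
    (n r : ℕ) (hrn : r < n) (hcard : Fintype.card V = n)
    (Vc : Finset V) (hVc : Vc.card = r)
    (hadj : ∀ i ∈ Vc, ∀ j : V, j ≠ i → G.Adj i j) :
    ∀ r' : ℕ, r' < r → IsRedundant G r r' := by
  intro r' _
  have hcore : ∀ u ∈ Vc, G.IsUniversal u := fun u hu w hw => hadj u hu w hw.symm
  have : Nonempty V := Fintype.card_pos_iff.1 (by omega)
  subst hVc
  exact SimpleGraph.isRedundant_of_twoHopGraph_eq_top
    (SimpleGraph.twoHopGraph_card_eq_top_of_isUniversal hcore (by omega)) r'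

theorem isRedundant_of_core (G : SimpleGraph V) [DecidableRel G.Adj]
    (n r : ℕ) (hr : 1 ≤ r) (hrn : r < n) (hcard : Fintype.card V = n)
    (Vc : Finset V) (hVc : Vc.card = r)
    (hadj : ∀ i ∈ Vc, ∀ j : V, j ≠ i → G.Adj i j) :
    ∀ r' : ℕ, r' < r → IsRedundant G r r' :=
  isRedundant_of_core_general G n r hrn hcard Vc hVc hadj
end

section
/- Let G be a finite simple undirected graph that is r-robust for some integer r ≥ 1, and let G' be the graph obtained from G by adding one new vertex v together with edges joining v to at least r vertices of G. Then G' is r-robust. -/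
/-- A graph `G` on vertex set `V` is `r`-robust if for every pair of nonempty
disjoint subsets `S₁, S₂ ⊆ V`, there exist `k ∈ {1,2}` and a vertex `i ∈ S_k`
having at least `r` neighbors outside `S_k`. -/
def IsRobust {V : Type*} (G : SimpleGraph V) (r : ℕ) : Prop :=
  ∀ S₁ S₂ : Set V, S₁.Nonempty → S₂.Nonempty → Disjoint S₁ S₂ →
    (∃ i ∈ S₁, r ≤ (G.neighborSet i \ S₁).ncard) ∨
    (∃ i ∈ S₂, r ≤ (G.neighborSet i \ S₂).ncard)


/-!
STATEMENT 7: Let G be a finite simple graph that is r-robust for some r ≥ 1, and let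
G' be obtained from G by adding one new vertex (here: `none` in `Option V`) together
with edges joining it to at least r vertices of G (and no other changes).
Then G' is r-robust.
-/

lemma aux_ncard_le {V : Type*} [Fintype V]
    (G : SimpleGraph V) (G' : SimpleGraph (Option V))
    (hsame : ∀ a b : V, G'.Adj (some a) (some b) ↔ G.Adj a b)
    (i : V) (S : Set (Option V)) :
    (G.neighborSet i \ (some ⁻¹' S)).ncard ≤ (G'.neighborSet (some i) \ S).ncard := by
  have himg : (some '' (G.neighborSet i \ (some ⁻¹' S))).ncard
      = (G.neighborSet i \ (some ⁻¹' S)).ncard :=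
    Set.ncard_image_of_injective _ (Option.some_injective V)
  rw [← himg]
  apply Set.ncard_le_ncard _ (Set.toFinite _)
  rintro x ⟨b, ⟨hb1, hb2⟩, rfl⟩
  exact ⟨(hsame i b).mpr hb1, hb2⟩

lemma preimage_nonempty {V : Type*} {S : Set (Option V)}
    (hS : S.Nonempty) (hn : none ∉ S) : (some ⁻¹' S).Nonempty := by
  obtain ⟨x, hx⟩ := hS
  cases x with
  | none => exact absurd hx hn
  | some b => exact ⟨b, hx⟩

theorem isRobust_add_vertex {V : Type*} [Fintype V]
    (G : SimpleGraph V) (r : ℕ) (hr : 1 ≤ r) (hG : IsRobust G r)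
    (G' : SimpleGraph (Option V))
    (hsame : ∀ a b : V, G'.Adj (some a) (some b) ↔ G.Adj a b)
    (hdeg : r ≤ (G'.neighborSet none).ncard) :
    IsRobust G' r := by
  intro S₁ S₂ h₁ h₂ hdisj
  have hdisjT : Disjoint (some ⁻¹' S₁) (some ⁻¹' S₂) := hdisj.preimage _
  -- helper to handle the "apply hG" situation
  have key : ∀ (hT1 : (some ⁻¹' S₁).Nonempty) (hT2 : (some ⁻¹' S₂).Nonempty),
      (∃ i ∈ S₁, r ≤ (G'.neighborSet i \ S₁).ncard) ∨
      (∃ i ∈ S₂, r ≤ (G'.neighborSet i \ S₂).ncard) := by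
    intro hT1 hT2
    rcases hG _ _ hT1 hT2 hdisjT with ⟨i, hi, hcard⟩ | ⟨i, hi, hcard⟩
    · exact Or.inl ⟨some i, hi, le_trans hcard (aux_ncard_le G G' hsame i S₁)⟩
    · exact Or.inr ⟨some i, hi, le_trans hcard (aux_ncard_le G G' hsame i S₂)⟩
  -- helper: if S = {none} essentially (no some elements, none ∈ S), then none works
  have single : ∀ S : Set (Option V), none ∈ S → ¬ (some ⁻¹' S).Nonempty →
      r ≤ (G'.neighborSet none \ S).ncard := by
    intro S hnS hTn
    have : G'.neighborSet none \ S = G'.neighborSet none := by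
      ext x
      simp only [Set.mem_diff, and_iff_left_iff_imp]
      intro hx hxS
      cases x with
      | none => exact G'.irrefl hx
      | some b => exact hTn ⟨b, hxS⟩
    rw [this]; exact hdeg
  by_cases hn1 : none ∈ S₁
  · have hn2 : none ∉ S₂ := fun h => (hdisj.ne_of_mem hn1 h) rfl
    by_cases hT1 : (some ⁻¹' S₁).Nonempty
    · exact key hT1 (preimage_nonempty h₂ hn2)
    · exact Or.inl ⟨none, hn1, single S₁ hn1 hT1⟩
  · by_cases hn2 : none ∈ S₂
    · by_cases hT2 : (some ⁻¹' S₂).Nonempty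
      · exact key (preimage_nonempty h₁ hn1) hT2
      · exact Or.inr ⟨none, hn2, single S₂ hn2 hT2⟩
    · exact key (preimage_nonempty h₁ hn1) (preimage_nonempty h₂ hn2)
end

section
/- Let n > r ≥ 1 be integers and let G be a finite simple undirected graph on a vertex set V of cardinality n. Suppose there is a subset V_c ⊆ V with |V_c| = r such that every vertex of V_c is adjacent (in G) to every other vertex of V. Then G is ⌈(r+1)/2⌉-robust. -/
/-!
Every vertex of `S` is adjacent to all vertices of `Vc \ S`, and a vertex of `Vc ∩ S`
is adjacent to all of `Sᶜ`.
Since `S₁` and `S₂` are disjoint, `|Vc \ S₁| + |Vc \ S₂| ≥ r` and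
`|S₁ᶜ| + |S₂ᶜ| ≥ n ≥ r + 1`.
If neither `|Vc \ S₁|` nor `|Vc \ S₂|` reaches `⌈(r+1)/2⌉`, then both are below `r`, so each
`Sₖ` contains a vertex of `Vc`, and one of `|S₁ᶜ|`, `|S₂ᶜ|` is at least `⌈(r+1)/2⌉`.
-/

namespace Set

variable {α : Type*}

theorem ncard_le_ncard_diff_add_ncard_diff [Finite α] (C : Set α) {S₁ S₂ : Set α}
    (h : Disjoint S₁ S₂) : C.ncard ≤ (C \ S₁).ncard + (C \ S₂).ncard := by
  have hcover : C ⊆ (C \ S₁) ∪ (C \ S₂) := fun x hx =>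
    (em (x ∈ S₁)).symm.imp (⟨hx, ·⟩) (⟨hx, h.notMem_of_mem_left ·⟩)
  exact (ncard_le_ncard hcover).trans (ncard_union_le _ _)

theorem inter_nonempty_of_ncard_diff_lt {C S : Set α} (h : (C \ S).ncard < C.ncard) :
    (C ∩ S).Nonempty := by
  rw [inter_nonempty_iff_exists_right]
  by_contra! hCS
  rw [sdiff_eq_self_iff_disjoint.mpr (disjoint_left.mpr hCS)] at h
  exact h.false

end Set

namespace SimpleGraph

variable {V : Type*} (G : SimpleGraph V) {C S : Set V}

theorem diff_subset_neighborSet_diff (hC : ∀ k ∈ C, ∀ j, j ≠ k → G.Adj k j) {i : V}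
    (hi : i ∈ S) : C \ S ⊆ G.neighborSet i \ S :=
  fun k ⟨hkC, hkS⟩ => ⟨(hC k hkC i fun hik => hkS (hik ▸ hi)).symm, hkS⟩

theorem neighborSet_diff_eq_compl {k : V} (hk : ∀ j, j ≠ k → G.Adj k j) (hkS : k ∈ S) :
    G.neighborSet k \ S = Sᶜ :=
  subset_antisymm (Set.sdiff_subset_compl _ _) fun j hj =>
    ⟨hk j fun hjk => hj (hjk ▸ hkS), hj⟩

end SimpleGraph

theorem isRobust_of_core_general {V : Type*} [Fintype V]
    (G : SimpleGraph V) (n r : ℕ) (hr : 1 ≤ r) (hrn : r < n)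
    (hcard : Fintype.card V = n)
    (Vc : Finset V) (hVc : Vc.card = r)
    (hadj : ∀ i ∈ Vc, ∀ j : V, j ≠ i → G.Adj i j) :
    IsRobust G ((r + 2) / 2) := by
  intro S₁ S₂ ⟨i₁, hi₁⟩ ⟨i₂, hi₂⟩ hdisj
  set m := (r + 2) / 2
  have hsees {S : Set V} {i : V} (hi : i ∈ S) :
      ((Vc : Set V) \ S).ncard ≤ (G.neighborSet i \ S).ncard :=
    Set.ncard_le_ncard (G.diff_subset_neighborSet_diff hadj hi)
  have hcore_card : (Vc : Set V).ncard = r := by rw [Set.ncard_coe_finset, hVc]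
  have hcore_split := (Vc : Set V).ncard_le_ncard_diff_add_ncard_diff hdisj
  by_cases h₁ : m ≤ ((Vc : Set V) \ S₁).ncard
  · exact .inl ⟨i₁, hi₁, h₁.trans (hsees hi₁)⟩
  by_cases h₂ : m ≤ ((Vc : Set V) \ S₂).ncard
  · exact .inr ⟨i₂, hi₂, h₂.trans (hsees hi₂)⟩
  obtain ⟨k₁, hk₁, hk₁S⟩ :=
    (Vc : Set V).inter_nonempty_of_ncard_diff_lt (S := S₁) (by omega)
  obtain ⟨k₂, hk₂, hk₂S⟩ :=
    (Vc : Set V).inter_nonempty_of_ncard_diff_lt (S := S₂) (by omega)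
  have hall := (Set.univ : Set V).ncard_le_ncard_diff_add_ncard_diff hdisj
  simp only [Set.ncard_univ, Nat.card_eq_fintype_card, hcard, ← Set.compl_eq_univ_sdiff] at hall
  rw [← G.neighborSet_diff_eq_compl (hadj k₁ hk₁) hk₁S,
    ← G.neighborSet_diff_eq_compl (hadj k₂ hk₂) hk₂S] at hall
  by_cases hS₁ : m ≤ (G.neighborSet k₁ \ S₁).ncard
  · exact .inl ⟨k₁, hk₁S, hS₁⟩
  · exact .inr ⟨k₂, hk₂S, by omega⟩

theorem isRobust_of_core {V : Type*} [Fintype V] [DecidableEq V]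
    (G : SimpleGraph V) (n r : ℕ) (hr : 1 ≤ r) (hrn : r < n)
    (hcard : Fintype.card V = n)
    (Vc : Finset V) (hVc : Vc.card = r)
    (hadj : ∀ i ∈ Vc, ∀ j : V, j ≠ i → G.Adj i j) :
    IsRobust G ((r + 2) / 2) :=
  isRobust_of_core_general G n r hr hrn hcard Vc hVc hadj
end
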